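/- arXiv:2305.17859 — 2 statements merged into one kernel-verified Lean document; each statement's English description precedes it below -/
import Mathlib

section
/- (Lemma 4.1). Let ν and {ν_n} be nonnegative finite Radon measures on Ω̄ such that ν_n ⇀* ν in ℳ(Ω̄). Then for any m ∈ C(Ω̄) with min_{Ω̄} m > 1 and every φ ∈ C(Ω̄), one has ‖φ‖_{L^{m(·)}_{ν_n}(Ω̄)} → ‖φ‖_{L^{m(·)}_{ν}(Ω̄)} as n → ∞. -/
/-
Common framework for formalizing:
H.H. Ha, K. Ho, "Multiplicity results for double phase problems involving a new
type of critical growth" (arXiv:2305.17859).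

We work with plain functions `u : ℝ^N → ℝ` together with a chosen representative
`g : ℝ^N → ℝ^N` of the weak gradient, so an element of the Musielak-Orlicz-Sobolev
space `W_0^{1,H}(Ω)` is encoded as a pair `(u, g)` satisfying `MemW0H`.
-/

open MeasureTheory Filter Topology
open scoped RealInnerProductSpace ENNReal NNReal

noncomputable section

namespace DoublePhase

/-- Euclidean space `ℝ^N`. -/
abbrev EN (N : ℕ) := EuclideanSpace ℝ (Fin N)

/-- A pair (function, representative of its weak gradient). -/
abbrev FnPair (N : ℕ) := (EN N → ℝ) × (EN N → EN N)

variable {N : ℕ}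

/-- `h ∈ C^{0,1}(closure Ω)`: Lipschitz continuity on the closure of `Ω`. -/
def LipschitzOnClosure (Ω : Set (EN N)) (h : EN N → ℝ) : Prop :=
  ∃ K : ℝ≥0, LipschitzOnWith K h (closure Ω)

/-- `h⁺ = max_{x ∈ closure Ω} h x`. -/
def supC (Ω : Set (EN N)) (h : EN N → ℝ) : ℝ := sSup (h '' closure Ω)

/-- `h⁻ = min_{x ∈ closure Ω} h x`. -/
def infC (Ω : Set (EN N)) (h : EN N → ℝ) : ℝ := sInf (h '' closure Ω)

/-- The critical Sobolev exponent `h* = N h/(N − h)`. -/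
def crit (N : ℕ) (t : ℝ) : ℝ := N * t / (N - t)

/-- Hypothesis (H_A).  (The Lipschitz regularity of `∂Ω` has no Mathlib counterpart;
`Ω` is a bounded domain: open, connected and bounded.) -/
structure HypA (N : ℕ) (Ω : Set (EN N)) (a p q : EN N → ℝ) : Prop where
  isOpen : IsOpen Ω
  conn : IsConnected Ω
  bounded : Bornology.IsBounded Ω
  lip_a : LipschitzOnClosure Ω a
  lip_p : LipschitzOnClosure Ω p
  lip_q : LipschitzOnClosure Ω q
  a_nonneg : ∀ x ∈ closure Ω, 0 ≤ a x
  one_lt_p : ∀ x ∈ closure Ω, 1 < p x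
  p_lt_q : ∀ x ∈ closure Ω, p x < q x
  q_lt_N : ∀ x ∈ closure Ω, q x < N
  ratio_lt : ∀ x ∈ closure Ω, q x / p x < 1 + 1 / N

/-- The double phase integrand `H(x,t) = |t|^{p(x)} + a(x)|t|^{q(x)}`. -/
def Hphi (a p q : EN N → ℝ) (x : EN N) (t : ℝ) : ℝ := |t| ^ p x + a x * |t| ^ q x

/-- The critical integrand `𝓑(x,t) = c₁(x)|t|^{r₁(x)} + c₂(x) a(x)^{r₂(x)/q(x)} |t|^{r₂(x)}`. -/
def Bphi (a q c1 c2 r1 r2 : EN N → ℝ) (x : EN N) (t : ℝ) : ℝ :=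
  c1 x * |t| ^ r1 x + c2 x * a x ^ (r2 x / q x) * |t| ^ r2 x

/-- The critical reaction `B(x,t) = c₁(x)|t|^{r₁(x)−2}t + c₂(x) a(x)^{r₂(x)/q(x)} |t|^{r₂(x)−2}t`. -/
def Breact (a q c1 c2 r1 r2 : EN N → ℝ) (x : EN N) (t : ℝ) : ℝ :=
  c1 x * |t| ^ (r1 x - 2) * t + c2 x * a x ^ (r2 x / q x) * |t| ^ (r2 x - 2) * t

/-- Hypothesis (H_B). -/
structure HypB (N : ℕ) (Ω : Set (EN N)) (a p q c1 c2 r1 r2 : EN N → ℝ) : Prop where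
  c1_bdd : ∃ C, ∀ x ∈ Ω, |c1 x| ≤ C
  c2_bdd : ∃ C, ∀ x ∈ Ω, |c2 x| ≤ C
  c1_meas : AEStronglyMeasurable c1 (volume.restrict Ω)
  c2_meas : AEStronglyMeasurable c2 (volume.restrict Ω)
  r1_cont : ContinuousOn r1 (closure Ω)
  r2_cont : ContinuousOn r2 (closure Ω)
  one_lt_r1 : ∀ x ∈ closure Ω, 1 < r1 x
  one_lt_r2 : ∀ x ∈ closure Ω, 1 < r2 x
  c1_pos : ∀ x ∈ Ω, 0 < c1 x
  c2_nonneg : ∀ x ∈ Ω, 0 ≤ c2 x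
  q_lt_r1 : ∀ x ∈ closure Ω, q x < r1 x
  r1_le_crit : ∀ x ∈ closure Ω, r1 x ≤ crit N (p x)
  crit_diff : ∀ x ∈ closure Ω, crit N (p x) - r1 x = crit N (q x) - r2 x
  crit_set_nonempty : ∃ x ∈ closure Ω, r1 x = crit N (p x) ∧ r2 x = crit N (q x)

/-- `φ ∈ C_c^∞(Ω)`. -/
def IsTestFun (Ω : Set (EN N)) (φ : EN N → ℝ) : Prop :=
  ContDiff ℝ (⊤ : ℕ∞) φ ∧ HasCompactSupport φ ∧ tsupport φ ⊆ Ω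

/-- `g` is a weak gradient of `u` on `Ω`. -/
def HasWeakGrad (Ω : Set (EN N)) (u : EN N → ℝ) (g : EN N → EN N) : Prop :=
  ∀ φ : EN N → ℝ, IsTestFun Ω φ → ∀ w : EN N,
    (∫ x in Ω, u x * fderiv ℝ φ x w) = -∫ x in Ω, ⟪g x, w⟫ * φ x

/-- The modular `ρ_Φ(u) = ∫_Ω Φ(x, u(x)) dx`. -/
def modularOn (Ω : Set (EN N)) (Φ : EN N → ℝ → ℝ) (u : EN N → ℝ) : ℝ :=
  ∫ x in Ω, Φ x (u x)

/-- Membership in the Musielak-Orlicz space `L^Φ(Ω)`. -/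
def MemLspace (Ω : Set (EN N)) (Φ : EN N → ℝ → ℝ) (u : EN N → ℝ) : Prop :=
  AEStronglyMeasurable u (volume.restrict Ω) ∧ IntegrableOn (fun x => Φ x (u x)) Ω

/-- The Luxemburg norm on `L^Φ(Ω)`. -/
def luxNorm (Ω : Set (EN N)) (Φ : EN N → ℝ → ℝ) (u : EN N → ℝ) : ℝ :=
  sInf {τ : ℝ | 0 < τ ∧ (∫ x in Ω, Φ x (u x / τ)) ≤ 1}

/-- The norm `‖u‖ := ‖ |∇u| ‖_H` of `W_0^{1,H}(Ω)`, evaluated on the weak gradient. -/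
def gradLuxNorm (Ω : Set (EN N)) (a p q : EN N → ℝ) (g : EN N → EN N) : ℝ :=
  luxNorm Ω (Hphi a p q) fun x => ‖g x‖

/-- The full norm `‖u‖_{1,H} = ‖u‖_H + ‖ |∇u| ‖_H` of `W^{1,H}(Ω)`. -/
def sob1Norm (Ω : Set (EN N)) (a p q : EN N → ℝ) (u : EN N → ℝ) (g : EN N → EN N) : ℝ :=
  luxNorm Ω (Hphi a p q) u + gradLuxNorm Ω a p q g

/-- Membership in `W^{1,H}(Ω)` (with `g` the chosen weak gradient of `u`). -/
def MemW1H (Ω : Set (EN N)) (a p q : EN N → ℝ) (u : EN N → ℝ) (g : EN N → EN N) : Prop :=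
  MemLspace Ω (Hphi a p q) u ∧ HasWeakGrad Ω u g ∧ MemLspace Ω (Hphi a p q) fun x => ‖g x‖

/-- Membership in `W_0^{1,H}(Ω)`: a `W^{1,H}(Ω)`-function that can be approximated in the
`W^{1,H}`-norm by functions of `C_c^∞(Ω)`. -/
def MemW0H (Ω : Set (EN N)) (a p q : EN N → ℝ) (u : EN N → ℝ) (g : EN N → EN N) : Prop :=
  MemW1H Ω a p q u g ∧
  ∀ ε : ℝ, 0 < ε → ∃ φ : EN N → ℝ, IsTestFun Ω φ ∧
    sob1Norm Ω a p q (fun x => u x - φ x) (fun x => g x - gradient φ x) < ε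

/-- The best constant `S` of the critical embedding `W_0^{1,H}(Ω) ↪ L^𝓑(Ω)`. -/
def Sconst (Ω : Set (EN N)) (a p q c1 c2 r1 r2 : EN N → ℝ) : ℝ :=
  sInf {r : ℝ | ∃ u g, MemW0H Ω a p q u g ∧
    ¬ u =ᵐ[volume.restrict Ω] (fun _ => (0 : ℝ)) ∧
    r = gradLuxNorm Ω a p q g / luxNorm Ω (Bphi a q c1 c2 r1 r2) u}

/-- The constant `κ₁` of hypothesis (P). -/
def kappa1 (Ω : Set (EN N)) (p : EN N → ℝ) : ℝ :=
  sInf {r : ℝ | ∃ φ : EN N → ℝ, IsTestFun Ω φ ∧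
    ¬ φ =ᵐ[volume.restrict Ω] (fun _ => (0 : ℝ)) ∧
    r = (∫ x in Ω, ‖gradient φ x‖ ^ p x) / ∫ x in Ω, |φ x| ^ p x}

/-- The measure with density `f` w.r.t. Lebesgue measure on `Ω`. -/
def densityMeasure (Ω : Set (EN N)) (f : EN N → ℝ) : Measure (EN N) :=
  (volume.restrict Ω).withDensity fun x => ENNReal.ofReal (f x)

/-- Weak-* convergence of measures in `ℳ(closure Ω) = (C(closure Ω))*`. -/
def WeakStarTo (Ω : Set (EN N)) (μn : ℕ → Measure (EN N)) (μ : Measure (EN N)) : Prop :=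
  ∀ f : EN N → ℝ, ContinuousOn f (closure Ω) →
    Tendsto (fun n => ∫ x, f x ∂(μn n)) atTop (𝓝 (∫ x, f x ∂μ))

/-- Luxemburg norm of the variable exponent space `L^{m(·)}_μ`. -/
def luxNormMeas (m : EN N → ℝ) (μ : Measure (EN N)) (φ : EN N → ℝ) : ℝ :=
  sInf {lam : ℝ | 0 < lam ∧ (∫ x, |φ x / lam| ^ m x ∂μ) ≤ 1}

/-- Weak convergence `uₙ ⇀ u` in `W_0^{1,H}(Ω)`: a norm-bounded sequence converging
in the sense of distributions (which, by reflexivity, is equivalent to weak convergence). -/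
def WeakConvW0 (Ω : Set (EN N)) (a p q : EN N → ℝ) (u : ℕ → EN N → ℝ)
    (g : ℕ → EN N → EN N) (v : EN N → ℝ) (h : EN N → EN N) : Prop :=
  (∃ C, ∀ n, gradLuxNorm Ω a p q (g n) ≤ C) ∧
  (∀ φ : EN N → ℝ, IsTestFun Ω φ →
    Tendsto (fun n => ∫ x in Ω, u n x * φ x) atTop (𝓝 (∫ x in Ω, v x * φ x))) ∧
  (∀ φ : EN N → ℝ, IsTestFun Ω φ → ∀ w : EN N,
    Tendsto (fun n => ∫ x in Ω, ⟪g n x, w⟫ * φ x) atTop (𝓝 (∫ x in Ω, ⟪h x, w⟫ * φ x)))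

/-- `f` is a Carathéodory function on `Ω × ℝ`. -/
def Caratheodory (Ω : Set (EN N)) (f : EN N → ℝ → ℝ) : Prop :=
  (∀ t : ℝ, AEStronglyMeasurable (fun x => f x t) (volume.restrict Ω)) ∧
  ∀ᵐ x ∂volume.restrict Ω, Continuous fun t => f x t

/-- `F(x,t) = ∫_0^t f(x,s) ds`. -/
def Fint (f : EN N → ℝ → ℝ) (x : EN N) (t : ℝ) : ℝ := ∫ s in (0 : ℝ)..t, f x s

/-- Hypothesis (F₀). -/
def HypF0 (Ω : Set (EN N)) (q r1 : EN N → ℝ) (f : EN N → ℝ → ℝ) (α : EN N → ℝ)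
    (C1 : ℝ) : Prop :=
  Caratheodory Ω f ∧ ContinuousOn α (closure Ω) ∧ 0 < C1 ∧
  (∀ x ∈ closure Ω, ∀ y ∈ closure Ω, q x < α y) ∧
  (∀ x ∈ closure Ω, α x < r1 x) ∧
  ∀ᵐ x ∂volume.restrict Ω, ∀ t : ℝ, |f x t| ≤ C1 * (1 + |t| ^ (α x - 1))

/-- Hypothesis (F₁): `f` is odd in `t`. -/
def HypF1 (Ω : Set (EN N)) (f : EN N → ℝ → ℝ) : Prop :=
  ∀ᵐ x ∂volume.restrict Ω, ∀ t : ℝ, f x (-t) = -f x t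

/-- `Bset` is an open ball contained in `Ω`. -/
def IsBallIn (Ω Bset : Set (EN N)) : Prop :=
  (∃ z ρ, 0 < ρ ∧ Bset = Metric.ball z ρ) ∧ Bset ⊆ Ω

/-- Hypothesis (F₂). -/
def HypF2 (Ω : Set (EN N)) (p r1 : EN N → ℝ) (f : EN N → ℝ → ℝ) (σf : EN N → ℝ)
    (Bset : Set (EN N)) (C2 C3 C4 C5 C6 : ℝ) : Prop :=
  ContinuousOn σf (closure Ω) ∧ (∀ x ∈ closure Ω, 1 < σf x) ∧
  (∀ x ∈ closure Ω, ∀ y ∈ closure Ω, σf x < p y) ∧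
  IsBallIn Ω Bset ∧ 0 < C2 ∧ 0 < C3 ∧ 0 < C4 ∧ 0 < C5 ∧ 0 < C6 ∧
  (∀ᵐ x ∂volume.restrict Ω, ∀ t : ℝ,
    0 ≤ Fint f x t ∧ Fint f x t ≤ C2 * |t| ^ σf x + C3 * |t| ^ p x ∧
    infC Ω r1 * Fint f x t - f x t * t ≤ C4 * |t| ^ σf x + C5 * |t| ^ p x) ∧
  ∀ᵐ x ∂volume.restrict Bset, ∀ t : ℝ, C6 * |t| ^ σf x ≤ Fint f x t

/-- Hypothesis (F₃). -/
def HypF3 (Ω : Set (EN N)) (p q r1 : EN N → ℝ) (f : EN N → ℝ → ℝ) (β : ℝ)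
    (e : EN N → ℝ) : Prop :=
  supC Ω q ≤ β ∧ β < infC Ω r1 ∧ IntegrableOn e Ω ∧
  ∀ᵐ x ∂volume.restrict Ω, ∀ t : ℝ,
    β * Fint f x t - f x t * t ≤ (β - supC Ω q) * kappa1 Ω p / supC Ω q * |t| ^ p x + e x

/-- Hypothesis (F₄): uniform superlinearity of `F` of order `q_B⁺` on the ball `Bset`. -/
def HypF4 (Ω : Set (EN N)) (q : EN N → ℝ) (f : EN N → ℝ → ℝ) (Bset : Set (EN N)) : Prop :=
  IsBallIn Ω Bset ∧
  ∀ L : ℝ, 0 < L → ∃ T : ℝ, 0 < T ∧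
    ∀ᵐ x ∂volume.restrict Bset, ∀ t : ℝ, T ≤ |t| → L * |t| ^ supC Bset q ≤ Fint f x t

/-- Hypothesis (F₅). -/
def HypF5 (Ω : Set (EN N)) (q r1 : EN N → ℝ) (f : EN N → ℝ → ℝ) (β : ℝ)
    (e : EN N → ℝ) : Prop :=
  supC Ω q ≤ β ∧ β < infC Ω r1 ∧ IntegrableOn e Ω ∧
  ∀ᵐ x ∂volume.restrict Ω, ∀ t : ℝ, β * Fint f x t - f x t * t ≤ e x

/-- Hypothesis (M) on the Kirchhoff term. -/
structure HypM (Mf : ℝ → ℝ) (τ0 : ℝ) : Prop where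
  τ0_pos : 0 < τ0
  cont : ContinuousOn Mf (Set.Ico 0 τ0)
  mono : MonotoneOn Mf (Set.Ico 0 τ0)
  m0_pos : 0 < Mf 0

/-- `A(x,ξ)·η = |ξ|^{p(x)−2}⟪ξ,η⟫ + a(x)|ξ|^{q(x)−2}⟪ξ,η⟫`. -/
def Aop (a p q : EN N → ℝ) (x : EN N) (ξ η : EN N) : ℝ :=
  ‖ξ‖ ^ (p x - 2) * ⟪ξ, η⟫ + a x * ‖ξ‖ ^ (q x - 2) * ⟪ξ, η⟫

/-- `𝒜(x,ξ) = |ξ|^{p(x)}/p(x) + a(x)|ξ|^{q(x)}/q(x)`. -/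
def Adens (a p q : EN N → ℝ) (x : EN N) (ξ : EN N) : ℝ :=
  ‖ξ‖ ^ p x / p x + a x * ‖ξ‖ ^ q x / q x

/-- `B̂(x,t) = ∫_0^t B(x,s) ds`. -/
def Bhat (a q c1 c2 r1 r2 : EN N → ℝ) (x : EN N) (t : ℝ) : ℝ :=
  ∫ s in (0 : ℝ)..t, Breact a q c1 c2 r1 r2 x s

/-- Weak solution of `−M(∫_Ω 𝒜(x,∇u)) div A(x,∇u) = λ f(x,u) + θ B(x,u)`, `u|_∂Ω = 0`. -/
def IsWeakSolution (Ω : Set (EN N)) (a p q c1 c2 r1 r2 : EN N → ℝ) (Mf : ℝ → ℝ)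
    (lam θ : ℝ) (f : EN N → ℝ → ℝ) (u : EN N → ℝ) (g : EN N → EN N) : Prop :=
  MemW0H Ω a p q u g ∧
  ∀ v gv, MemW0H Ω a p q v gv →
    Mf (∫ x in Ω, Adens a p q x (g x)) * (∫ x in Ω, Aop a p q x (g x) (gv x))
      = lam * (∫ x in Ω, f x (u x) * v x)
        + θ * ∫ x in Ω, Breact a q c1 c2 r1 r2 x (u x) * v x

/-- The truncated Kirchhoff term `M₀`. -/
def Mtrunc (Mf : ℝ → ℝ) (t0 t : ℝ) : ℝ := if t ≤ t0 then Mf t else Mf t0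

/-- `M̂₀(t) = ∫_0^t M₀(s) ds`. -/
def MtruncHat (Mf : ℝ → ℝ) (t0 t : ℝ) : ℝ := ∫ s in (0 : ℝ)..t, Mtrunc Mf t0 s

/-- The energy functional `Ψ_θ` of the superlinear problem. -/
def PsiVal (Ω : Set (EN N)) (a p q c1 c2 r1 r2 : EN N → ℝ) (θ : ℝ) (f : EN N → ℝ → ℝ)
    (P : FnPair N) : ℝ :=
  (∫ x in Ω, Adens a p q x (P.2 x)) - (∫ x in Ω, Fint f x (P.1 x))
    - θ * ∫ x in Ω, Bhat a q c1 c2 r1 r2 x (P.1 x)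

/-- The Fréchet derivative pairing `⟨Ψ_θ'(P), Q⟩`. -/
def PsiDer (Ω : Set (EN N)) (a p q c1 c2 r1 r2 : EN N → ℝ) (θ : ℝ) (f : EN N → ℝ → ℝ)
    (P Q : FnPair N) : ℝ :=
  (∫ x in Ω, Aop a p q x (P.2 x) (Q.2 x)) - (∫ x in Ω, f x (P.1 x) * Q.1 x)
    - θ * ∫ x in Ω, Breact a q c1 c2 r1 r2 x (P.1 x) * Q.1 x

/-- The modified (truncated-Kirchhoff) energy functional `Φ_λ`. -/
def PhiVal (Ω : Set (EN N)) (a p q c1 c2 r1 r2 : EN N → ℝ) (Mf : ℝ → ℝ) (t0 lam : ℝ)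
    (f : EN N → ℝ → ℝ) (P : FnPair N) : ℝ :=
  MtruncHat Mf t0 (∫ x in Ω, Adens a p q x (P.2 x))
    - lam * (∫ x in Ω, Fint f x (P.1 x)) - ∫ x in Ω, Bhat a q c1 c2 r1 r2 x (P.1 x)

/-- The Fréchet derivative pairing `⟨Φ_λ'(P), Q⟩`. -/
def PhiDer (Ω : Set (EN N)) (a p q c1 c2 r1 r2 : EN N → ℝ) (Mf : ℝ → ℝ) (t0 lam : ℝ)
    (f : EN N → ℝ → ℝ) (P Q : FnPair N) : ℝ :=
  Mtrunc Mf t0 (∫ x in Ω, Adens a p q x (P.2 x)) * (∫ x in Ω, Aop a p q x (P.2 x) (Q.2 x))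
    - lam * (∫ x in Ω, f x (P.1 x) * Q.1 x)
    - ∫ x in Ω, Breact a q c1 c2 r1 r2 x (P.1 x) * Q.1 x

/-- The truncated functional `T_λ`, with cut-off `φcut` applied at `∫_Ω 𝒜(x,∇u)`. -/
def TVal (Ω : Set (EN N)) (a p q c1 c2 r1 r2 : EN N → ℝ) (Mf : ℝ → ℝ) (t0 lam : ℝ)
    (f : EN N → ℝ → ℝ) (φcut : ℝ → ℝ) (P : FnPair N) : ℝ :=
  MtruncHat Mf t0 (∫ x in Ω, Adens a p q x (P.2 x))
    - φcut (∫ x in Ω, Adens a p q x (P.2 x)) *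
        (lam * (∫ x in Ω, Fint f x (P.1 x)) + ∫ x in Ω, Bhat a q c1 c2 r1 r2 x (P.1 x))

/-- The Fréchet derivative pairing `⟨T_λ'(P), Q⟩`. -/
def TDer (Ω : Set (EN N)) (a p q c1 c2 r1 r2 : EN N → ℝ) (Mf : ℝ → ℝ) (t0 lam : ℝ)
    (f : EN N → ℝ → ℝ) (φcut : ℝ → ℝ) (P Q : FnPair N) : ℝ :=
  Mtrunc Mf t0 (∫ x in Ω, Adens a p q x (P.2 x)) * (∫ x in Ω, Aop a p q x (P.2 x) (Q.2 x))
    - deriv φcut (∫ x in Ω, Adens a p q x (P.2 x)) * (∫ x in Ω, Aop a p q x (P.2 x) (Q.2 x)) *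
        (lam * (∫ x in Ω, Fint f x (P.1 x)) + ∫ x in Ω, Bhat a q c1 c2 r1 r2 x (P.1 x))
    - φcut (∫ x in Ω, Adens a p q x (P.2 x)) *
        (lam * (∫ x in Ω, f x (P.1 x) * Q.1 x)
          + ∫ x in Ω, Breact a q c1 c2 r1 r2 x (P.1 x) * Q.1 x)

/-- The Palais-Smale condition at level `c` for a functional with value `val` and
derivative pairing `der`; `‖der(Pₙ)‖_{X*} → 0` is expressed through a vanishing
sequence of bounds, and subsequential strong convergence is convergence in the
norm `‖·‖ = ‖∇·‖_H` of `W_0^{1,H}(Ω)`. -/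
def PSCond (Ω : Set (EN N)) (a p q : EN N → ℝ) (val : FnPair N → ℝ)
    (der : FnPair N → FnPair N → ℝ) (c : ℝ) : Prop :=
  ∀ P : ℕ → FnPair N,
    (∀ n, MemW0H Ω a p q (P n).1 (P n).2) →
    Tendsto (fun n => val (P n)) atTop (𝓝 c) →
    (∃ ε : ℕ → ℝ, Tendsto ε atTop (𝓝 0) ∧
      ∀ n, ∀ Q : FnPair N, MemW0H Ω a p q Q.1 Q.2 →
        |der (P n) Q| ≤ ε n * gradLuxNorm Ω a p q Q.2) →
    ∃ (σ : ℕ → ℕ) (R : FnPair N), StrictMono σ ∧ MemW0H Ω a p q R.1 R.2 ∧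
      Tendsto (fun k => gradLuxNorm Ω a p q fun x => (P (σ k)).2 x - R.2 x) atTop (𝓝 0)

/-- `−P` in `W_0^{1,H}(Ω)`. -/
def negPt (P : FnPair N) : FnPair N := (fun x => -P.1 x, fun x => -P.2 x)

/-- `P + Q` in `W_0^{1,H}(Ω)`. -/
def addPt (P Q : FnPair N) : FnPair N := (fun x => P.1 x + Q.1 x, fun x => P.2 x + Q.2 x)

/-- `c • P` in `W_0^{1,H}(Ω)`. -/
def smulPt (c : ℝ) (P : FnPair N) : FnPair N := (fun x => c * P.1 x, fun x => c • P.2 x)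

/-- Distance induced by the norm `‖·‖ = ‖∇·‖_H` of `W_0^{1,H}(Ω)`. -/
def dX (Ω : Set (EN N)) (a p q : EN N → ℝ) (P Q : FnPair N) : ℝ :=
  gradLuxNorm Ω a p q fun x => P.2 x - Q.2 x

/-- Sequential continuity (w.r.t. the `W_0^{1,H}`-norm) of a map on `A`. -/
def SeqContOn (Ω : Set (EN N)) (a p q : EN N → ℝ) (A : Set (FnPair N)) {k : ℕ}
    (h : FnPair N → EuclideanSpace ℝ (Fin k)) : Prop :=
  ∀ (Pn : ℕ → FnPair N) (Q : FnPair N), (∀ n, Pn n ∈ A) → Q ∈ A →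
    Tendsto (fun n => dX Ω a p q (Pn n) Q) atTop (𝓝 0) →
    Tendsto (fun n => h (Pn n)) atTop (𝓝 (h Q))

/-- The Krasnoselskii genus of `A` is at least `k`: for no `j < k` does there exist an
odd continuous nonvanishing map `A → ℝ^j \ {0}`. -/
def genusGe (Ω : Set (EN N)) (a p q : EN N → ℝ) (A : Set (FnPair N)) (k : ℕ) : Prop :=
  ∀ j : ℕ, j < k →
    ¬ ∃ h : FnPair N → EuclideanSpace ℝ (Fin j),
      (∀ P ∈ A, h P ≠ 0) ∧ (∀ P ∈ A, h (negPt P) = -h P) ∧ SeqContOn Ω a p q A h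

/-- The family `Σ` of closed (in `X \ {0}`) symmetric subsets of `W_0^{1,H}(Ω) \ {0}`. -/
def SigmaFam (Ω : Set (EN N)) (a p q : EN N → ℝ) : Set (Set (FnPair N)) :=
  {A | (∀ P ∈ A, MemW0H Ω a p q P.1 P.2 ∧
          ¬ P.1 =ᵐ[volume.restrict Ω] (fun _ => (0 : ℝ))) ∧
       (∀ P ∈ A, negPt P ∈ A) ∧
       (∀ (Pn : ℕ → FnPair N) (Q : FnPair N), (∀ n, Pn n ∈ A) →
          MemW0H Ω a p q Q.1 Q.2 → ¬ Q.1 =ᵐ[volume.restrict Ω] (fun _ => (0 : ℝ)) →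
          Tendsto (fun n => dX Ω a p q (Pn n) Q) atTop (𝓝 0) → Q ∈ A)}

/-- The genus minimax values `c_k = inf_{E ∈ Σ_k} sup_{u ∈ E} T(u)` (in `EReal`). -/
def ckGenus (Ω : Set (EN N)) (a p q : EN N → ℝ) (TV : FnPair N → ℝ) (k : ℕ) : EReal :=
  sInf {r : EReal | ∃ A ∈ SigmaFam Ω a p q, genusGe Ω a p q A k ∧
    r = ⨆ P ∈ A, (TV P : EReal)}

/-- Membership in the span of the first `k` elements of the sequence `φs`. -/
def InSpanPairs (φs : ℕ → FnPair N) (k : ℕ) (P : FnPair N) : Prop :=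
  ∃ cvec : Fin k → ℝ,
    P.1 = (fun x => ∑ j : Fin k, cvec j * (φs j).1 x) ∧
    P.2 = (fun x => ∑ j : Fin k, cvec j • (φs j).2 x)

/-- `(φ, gφ)` is a weak Dirichlet eigenpair of `−Δ` on `Bset` with eigenvalue `μ`. -/
def IsDirichletEigenpair (Bset : Set (EN N)) (φ : EN N → ℝ) (gφ : EN N → EN N)
    (μ : ℝ) : Prop :=
  HasWeakGrad Bset φ gφ ∧
  tsupport φ ⊆ closure Bset ∧
  (∀ ε : ℝ, 0 < ε → ∃ ψ, IsTestFun Bset ψ ∧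
    (∫ x in Bset, ((φ x - ψ x) ^ 2 + ‖gφ x - gradient ψ x‖ ^ 2)) < ε) ∧
  ¬ φ =ᵐ[volume.restrict Bset] (fun _ => (0 : ℝ)) ∧
  ∀ ψ, IsTestFun Bset ψ →
    (∫ x in Bset, ⟪gφ x, gradient ψ x⟫) = μ * ∫ x in Bset, φ x * ψ x

/-- The disc `D_k = {u ∈ X_k : ‖u‖ ≤ R_k}`. -/
def Dkset (Ω : Set (EN N)) (a p q : EN N → ℝ) (φs : ℕ → FnPair N) (k : ℕ) (Rk : ℝ) :
    Set (FnPair N) :=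
  {P | InSpanPairs φs k P ∧ gradLuxNorm Ω a p q P.2 ≤ Rk}

/-- The sphere `∂D_k = {u ∈ X_k : ‖u‖ = R_k}`. -/
def bdryDkset (Ω : Set (EN N)) (a p q : EN N → ℝ) (φs : ℕ → FnPair N) (k : ℕ) (Rk : ℝ) :
    Set (FnPair N) :=
  {P | InSpanPairs φs k P ∧ gradLuxNorm Ω a p q P.2 = Rk}

/-- Membership in `G_k`: odd continuous maps `D_k → X` equal to the identity on `∂D_k`. -/
def MemGk (Ω : Set (EN N)) (a p q : EN N → ℝ) (φs : ℕ → FnPair N) (k : ℕ) (Rk : ℝ)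
    (T : FnPair N → FnPair N) : Prop :=
  (∀ P ∈ Dkset Ω a p q φs k Rk, MemW0H Ω a p q (T P).1 (T P).2) ∧
  (∀ P ∈ Dkset Ω a p q φs k Rk, T (negPt P) = negPt (T P)) ∧
  (∀ P ∈ bdryDkset Ω a p q φs k Rk, T P = P) ∧
  ∀ (Pn : ℕ → FnPair N) (Q : FnPair N), (∀ n, Pn n ∈ Dkset Ω a p q φs k Rk) →
    Q ∈ Dkset Ω a p q φs k Rk →
    Tendsto (fun n => dX Ω a p q (Pn n) Q) atTop (𝓝 0) →
    Tendsto (fun n => dX Ω a p q (T (Pn n)) (T Q)) atTop (𝓝 0)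

/-- The minimax values `c_k = inf_{g ∈ G_k} max_{u ∈ D_k} Ψ_θ(g(u))` (in `EReal`). -/
def ckMP (Ω : Set (EN N)) (a p q : EN N → ℝ) (φs : ℕ → FnPair N) (k : ℕ) (Rk : ℝ)
    (val : FnPair N → ℝ) : EReal :=
  sInf {r : EReal | ∃ T : FnPair N → FnPair N, MemGk Ω a p q φs k Rk T ∧
    r = ⨆ P ∈ Dkset Ω a p q φs k Rk, (val (T P) : EReal)}

/-- Partial sums `∑_{j<n} β_j e_j` of a Schauder expansion. -/
def partialSumPt (e : ℕ → FnPair N) (β : ℕ → ℝ) (n : ℕ) : FnPair N :=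
  (fun x => ∑ j ∈ Finset.range n, β j * (e j).1 x,
   fun x => ∑ j ∈ Finset.range n, β j • (e j).2 x)


/-- **Lemma 4.1**: if nonnegative finite Radon measures `νₙ` on `closure Ω` converge
weakly-* to `ν`, then for any exponent `m ∈ C(closure Ω)` with `min m > 1` and any
`φ ∈ C(closure Ω)`, the Luxemburg norms converge:
`‖φ‖_{L^{m(·)}_{νₙ}} → ‖φ‖_{L^{m(·)}_{ν}}`. -/
theorem lux_norm_weak_star_convergence
    (N : ℕ) (Ω : Set (EN N)) (hΩo : IsOpen Ω) (hΩconn : IsConnected Ω)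
    (hΩb : Bornology.IsBounded Ω)
    (νn : ℕ → Measure (EN N)) (ν : Measure (EN N))
    (hfinn : ∀ n, IsFiniteMeasure (νn n)) (hfin : IsFiniteMeasure ν)
    (hsuppn : ∀ n, νn n (closure Ω)ᶜ = 0) (hsupp : ν (closure Ω)ᶜ = 0)
    (hconv : WeakStarTo Ω νn ν)
    (m : EN N → ℝ) (hm : ContinuousOn m (closure Ω)) (hm1 : ∀ x ∈ closure Ω, 1 < m x)
    (φ : EN N → ℝ) (hφ : ContinuousOn φ (closure Ω)) :
    Tendsto (fun n => luxNormMeas m (νn n) φ) atTop (𝓝 (luxNormMeas m ν φ)) := by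
  classical
  set K := closure Ω with hKdef
  have hKc : IsCompact K := hΩb.isCompact_closure
  have hKne : K.Nonempty := hΩconn.nonempty.closure
  obtain ⟨x₀, hx₀K, hx₀min⟩ := hKc.exists_isMinOn hKne hm
  set m₀ := m x₀ with hm₀def
  have hm₀1 : 1 < m₀ := hm1 x₀ hx₀K
  have hm₀le : ∀ x ∈ K, m₀ ≤ m x := fun x hx => hx₀min hx
  obtain ⟨C₀, hC₀⟩ := hKc.exists_bound_of_continuousOn hφ
  set C := max C₀ 1 with hCdef
  have hC1 : (1:ℝ) ≤ C := le_max_right _ _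
  have hC0 : (0:ℝ) < C := lt_of_lt_of_le one_pos hC1
  have hCb : ∀ x ∈ K, |φ x| ≤ C := fun x hx => le_trans (hC₀ x hx) (le_max_left _ _)
  set I : Measure (EN N) → ℝ → ℝ := fun μ lam => ∫ x, |φ x / lam| ^ m x ∂μ with hIdef
  set S : Measure (EN N) → Set ℝ := fun μ => {lam : ℝ | 0 < lam ∧ I μ lam ≤ 1} with hSdef
  have hmpos : ∀ x ∈ K, 0 < m x := fun x hx => lt_trans one_pos (hm1 x hx)
  have hcont : ∀ lam : ℝ, lam ≠ 0 → ContinuousOn (fun x => |φ x / lam| ^ m x) K := by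
    intro lam hlam
    exact ((hφ.div_const lam).abs).rpow hm fun x hx => Or.inr (hmpos x hx)
  have hnn : ∀ (x : EN N) (lam : ℝ), 0 ≤ |φ x / lam| ^ m x :=
    fun x lam => Real.rpow_nonneg (abs_nonneg _) _
  have hint : ∀ μ : Measure (EN N), IsFiniteMeasure μ → μ Kᶜ = 0 → ∀ lam : ℝ, lam ≠ 0 →
      Integrable (fun x => |φ x / lam| ^ m x) μ := by
    intro μ hμf hμ0 lam hlam
    haveI := hμf
    have hres : μ.restrict K = μ :=
      Measure.restrict_eq_self_of_ae_mem (mem_ae_iff.mpr hμ0)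
    rw [← hres]
    exact (hcont lam hlam).integrableOn_compact hKc
  have hmono : ∀ μ : Measure (EN N), IsFiniteMeasure μ → μ Kᶜ = 0 →
      ∀ lam lam' : ℝ, 0 < lam → lam ≤ lam' → I μ lam' ≤ I μ lam := by
    intro μ hμf hμ0 lam lam' hlam hle
    haveI := hμf
    have hlam' : 0 < lam' := lt_of_lt_of_le hlam hle
    refine integral_mono_ae (hint μ hμf hμ0 lam' hlam'.ne') (hint μ hμf hμ0 lam hlam.ne') ?_
    filter_upwards [mem_ae_iff.mpr hμ0] with x hx
    have hb : |φ x / lam'| ≤ |φ x / lam| := by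
      rw [abs_div, abs_div, abs_of_pos hlam, abs_of_pos hlam']
      gcongr
    exact Real.rpow_le_rpow (abs_nonneg _) hb (hmpos x hx).le
  have hbig : ∀ μ : Measure (EN N), IsFiniteMeasure μ → μ Kᶜ = 0 →
      ∀ B : ℝ, 1 ≤ B → I μ (C * B) ≤ (μ Set.univ).toReal / B := by
    intro μ hμf hμ0 B hB
    haveI := hμf
    have hBpos : (0:ℝ) < B := lt_of_lt_of_le one_pos hB
    have hCB : (0:ℝ) < C * B := mul_pos hC0 hBpos
    have hle1 : ∀ x ∈ K, |φ x / (C * B)| ^ m x ≤ 1 / B := by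
      intro x hx
      have h1 : |φ x / (C * B)| ≤ 1 / B := by
        rw [abs_div, abs_of_pos hCB, div_le_div_iff₀ hCB hBpos]
        have := hCb x hx
        nlinarith
      have h2 : (0:ℝ) ≤ 1 / B := by positivity
      have h3 : 1 / B ≤ 1 := by
        rw [div_le_one hBpos]; exact hB
      calc |φ x / (C * B)| ^ m x ≤ (1 / B) ^ m x :=
            Real.rpow_le_rpow (abs_nonneg _) h1 (hmpos x hx).le
        _ ≤ (1 / B) ^ (1:ℝ) :=
            Real.rpow_le_rpow_of_exponent_ge' h2 h3 one_pos.le (hm1 x hx).le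
        _ = 1 / B := Real.rpow_one _
    calc I μ (C * B) ≤ ∫ _x, (1 / B : ℝ) ∂μ := by
          refine integral_mono_ae (hint μ hμf hμ0 _ hCB.ne') (integrable_const _) ?_
          filter_upwards [mem_ae_iff.mpr hμ0] with x hx using hle1 x hx
      _ = (μ Set.univ).toReal * (1 / B) := by
          rw [integral_const, smul_eq_mul, Measure.real]
      _ = (μ Set.univ).toReal / B := by ring
  have hscale : ∀ lam t : ℝ, 0 < lam → 1 < t → I ν (t * lam) ≤ t ^ (-m₀) * I ν lam := by
    intro lam t hlam ht
    have htpos : (0:ℝ) < t := lt_trans one_pos ht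
    have htl : (0:ℝ) < t * lam := mul_pos htpos hlam
    have h1 : I ν (t * lam) ≤ ∫ x, t ^ (-m₀) * |φ x / lam| ^ m x ∂ν := by
      refine integral_mono_ae (hint ν hfin hsupp _ htl.ne')
        ((hint ν hfin hsupp lam hlam.ne').const_mul _) ?_
      filter_upwards [mem_ae_iff.mpr hsupp] with x hx
      have habs : |φ x / (t * lam)| = |φ x / lam| * t⁻¹ := by
        rw [abs_div, abs_div, abs_of_pos hlam, abs_of_pos htl, mul_comm t lam,
          ← div_div, div_eq_mul_inv]
      rw [habs, Real.mul_rpow (abs_nonneg _) (inv_nonneg.mpr htpos.le),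
        Real.inv_rpow htpos.le, ← Real.rpow_neg htpos.le]
      calc |φ x / lam| ^ m x * t ^ (-m x)
          ≤ |φ x / lam| ^ m x * t ^ (-m₀) := by
            refine mul_le_mul_of_nonneg_left ?_ (hnn x lam)
            exact Real.rpow_le_rpow_of_exponent_le ht.le (neg_le_neg (hm₀le x hx))
        _ = t ^ (-m₀) * |φ x / lam| ^ m x := mul_comm _ _
    calc I ν (t * lam) ≤ ∫ x, t ^ (-m₀) * |φ x / lam| ^ m x ∂ν := h1
      _ = t ^ (-m₀) * I ν lam := integral_const_mul _ _
  have hItend : ∀ lam : ℝ, 0 < lam →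
      Tendsto (fun n => I (νn n) lam) atTop (𝓝 (I ν lam)) :=
    fun lam hlam => hconv _ (hcont lam hlam.ne')
  have hMtend : Tendsto (fun n => ((νn n) Set.univ).toReal) atTop
      (𝓝 ((ν Set.univ).toReal)) := by
    have h := hconv (fun _ => (1:ℝ)) continuousOn_const
    simpa [integral_const, smul_eq_mul, Measure.real] using h
  have hbddS : ∀ μ : Measure (EN N), BddBelow (S μ) := fun μ => ⟨0, fun lam h => h.1.le⟩
  have hLnn : ∀ μ : Measure (EN N), 0 ≤ sInf (S μ) :=
    fun μ => Real.sInf_nonneg fun x hx => hx.1.le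
  have hMnn : (0:ℝ) ≤ (ν Set.univ).toReal := ENNReal.toReal_nonneg
  have hSν_ne : (S ν).Nonempty := by
    refine ⟨C * ((ν Set.univ).toReal + 1), ⟨by positivity, ?_⟩⟩
    refine le_trans (hbig ν hfin hsupp ((ν Set.univ).toReal + 1) (by linarith)) ?_
    rw [div_le_one (by linarith)]
    linarith
  show Tendsto (fun n => sInf (S (νn n))) atTop (𝓝 (sInf (S ν)))
  refine tendsto_order.2 ⟨?_, ?_⟩
  · intro a ha
    rcases lt_or_ge a 0 with ha0 | ha0
    · exact Filter.Eventually.of_forall fun n => lt_of_lt_of_le ha0 (hLnn _)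
    · set L := sInf (S ν) with hLdef
      set lam₁ := (a + L) / 2 with hlam₁def
      have hal : a < lam₁ := by
        rw [hlam₁def]; linarith
      have hl₁L : lam₁ < L := by
        rw [hlam₁def]; linarith
      have hlam₁pos : 0 < lam₁ := lt_of_le_of_lt ha0 hal
      have hnotS : 1 < I ν lam₁ := by
        by_contra h
        push_neg at h
        exact absurd (csInf_le (hbddS ν) ⟨hlam₁pos, h⟩) (not_le.mpr hl₁L)
      have hev1 : ∀ᶠ n in atTop, 1 < I (νn n) lam₁ :=
        (hItend lam₁ hlam₁pos).eventually_const_lt hnotS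
      have hev2 : ∀ᶠ n in atTop, ((νn n) Set.univ).toReal < (ν Set.univ).toReal + 1 :=
        hMtend.eventually_lt_const (by linarith)
      filter_upwards [hev1, hev2] with n h1 h2
      have hne : (S (νn n)).Nonempty := by
        refine ⟨C * ((ν Set.univ).toReal + 2), ⟨by positivity, ?_⟩⟩
        refine le_trans (hbig (νn n) (hfinn n) (hsuppn n)
          ((ν Set.univ).toReal + 2) (by linarith)) ?_
        rw [div_le_one (by linarith)]
        linarith
      refine lt_of_lt_of_le hal (le_csInf hne ?_)
      intro x hx
      by_contra hxl
      push_neg at hxl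
      have hmm := hmono (νn n) (hfinn n) (hsuppn n) x lam₁ hx.1 hxl.le
      exact absurd hx.2 (not_le.mpr (lt_of_lt_of_le h1 hmm))
  · intro b hb
    set L := sInf (S ν) with hLdef
    have hL0 : 0 ≤ L := hLnn ν
    have hμpos : 0 < (L + b) / 2 := by linarith
    obtain ⟨lam₀, hlam₀S, hlam₀lt⟩ :=
      exists_lt_of_csInf_lt hSν_ne (show L < (L + b) / 2 by linarith)
    have hlam₀pos : 0 < lam₀ := hlam₀S.1
    set t := ((L + b) / 2) / lam₀ with htdef
    have ht1 : 1 < t := (one_lt_div hlam₀pos).mpr hlam₀lt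
    have htpos : (0:ℝ) < t := lt_trans one_pos ht1
    have htlam : t * lam₀ = (L + b) / 2 := div_mul_cancel₀ _ hlam₀pos.ne'
    have hIlt : I ν ((L + b) / 2) < 1 := by
      have h1 := hscale lam₀ t hlam₀pos ht1
      rw [htlam] at h1
      have h2 : t ^ (-m₀) * I ν lam₀ ≤ t ^ (-m₀) * 1 :=
        mul_le_mul_of_nonneg_left hlam₀S.2 (Real.rpow_nonneg htpos.le _)
      have h3 : t ^ (-m₀) < 1 := Real.rpow_lt_one_of_one_lt_of_neg ht1 (by linarith)
      calc I ν ((L + b) / 2) ≤ t ^ (-m₀) * I ν lam₀ := h1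
        _ ≤ t ^ (-m₀) * 1 := h2
        _ = t ^ (-m₀) := mul_one _
        _ < 1 := h3
    have hev := (hItend _ hμpos).eventually_lt_const hIlt
    filter_upwards [hev] with n h1
    have hle : sInf (S (νn n)) ≤ (L + b) / 2 := csInf_le (hbddS _) ⟨hμpos, h1.le⟩
    calc sInf (S (νn n)) ≤ (L + b) / 2 := hle
      _ < b := by linarith

end DoublePhase
end
end

section
/- (Lemma 4.3, Brezis–Lieb lemma for Musielak–Orlicz modulars). Let Φ(x,t) := b(x)t^{r(x)} + c(x)t^{s(x)} for (x,t) ∈ Ω̄ × [0,∞), where r, s ∈ C(Ω̄) with min r > 1, min s > 1 and r(x) < s(x) on Ω̄, b ∈ L^1(Ω) with b > 0 a.e., and c ∈ L^1(Ω) with c ≥ 0 a.e. Let {f_n} be a sequence of measurable functions on Ω that is bounded in L^Φ(Ω) and satisfies f_n(x) → f(x) for a.a. x ∈ Ω. Then f ∈ L^Φ(Ω) and lim_{n→∞} ∫_Ω | Φ(x,|f_n|) − Φ(x,|f_n − f|) − Φ(x,|f|) | dx = 0. -/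
/-
Common framework for formalizing:
H.H. Ha, K. Ho, "Multiplicity results for double phase problems involving a new
type of critical growth" (arXiv:2305.17859).

We work with plain functions `u : ℝ^N → ℝ` together with a chosen representative
`g : ℝ^N → ℝ^N` of the weak gradient, so an element of the Musielak-Orlicz-Sobolev
space `W_0^{1,H}(Ω)` is encoded as a pair `(u, g)` satisfying `MemW0H`.
-/

open MeasureTheory Filter Topology
open scoped RealInnerProductSpace ENNReal NNReal

noncomputable section

namespace DoublePhase

variable {N : ℕ}

section BLaux

/-- Pointwise nonnegativity of the integrand. -/
lemma BLaux.phi_nonneg {b c r s t : ℝ} (hb : 0 ≤ b) (hc : 0 ≤ c) :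
    0 ≤ b * |t| ^ r + c * |t| ^ s :=
  add_nonneg (mul_nonneg hb (Real.rpow_nonneg (abs_nonneg _) _))
    (mul_nonneg hc (Real.rpow_nonneg (abs_nonneg _) _))

lemma BLaux.phi_mono {b c r s t1 t2 : ℝ} (hb : 0 ≤ b) (hc : 0 ≤ c) (hr : 0 ≤ r) (hs : 0 ≤ s)
    (h : |t1| ≤ |t2|) :
    b * |t1| ^ r + c * |t1| ^ s ≤ b * |t2| ^ r + c * |t2| ^ s := by
  have h1 : |t1| ^ r ≤ |t2| ^ r := Real.rpow_le_rpow (abs_nonneg _) h hr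
  have h2 : |t1| ^ s ≤ |t2| ^ s := Real.rpow_le_rpow (abs_nonneg _) h hs
  have := mul_le_mul_of_nonneg_left h1 hb
  have := mul_le_mul_of_nonneg_left h2 hc
  linarith

lemma BLaux.phi_scale {b c r s M lam t : ℝ} (hb : 0 ≤ b) (hc : 0 ≤ c)
    (hr : 0 ≤ r) (hrM : r ≤ M) (hs : 0 ≤ s) (hsM : s ≤ M) (hlam : 1 ≤ lam) :
    b * |lam * t| ^ r + c * |lam * t| ^ s ≤ lam ^ M * (b * |t| ^ r + c * |t| ^ s) := by
  have hlam0 : 0 < lam := lt_of_lt_of_le one_pos hlam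
  have habs : |lam * t| = lam * |t| := by rw [abs_mul, abs_of_pos hlam0]
  have hkey : ∀ p : ℝ, 0 ≤ p → p ≤ M → |lam * t| ^ p ≤ lam ^ M * |t| ^ p := by
    intro p hp hpM
    rw [habs, Real.mul_rpow hlam0.le (abs_nonneg _)]
    exact mul_le_mul_of_nonneg_right (Real.rpow_le_rpow_of_exponent_le hlam hpM)
      (Real.rpow_nonneg (abs_nonneg _) _)
  have h1 := mul_le_mul_of_nonneg_left (hkey r hr hrM) hb
  have h2 := mul_le_mul_of_nonneg_left (hkey s hs hsM) hc
  nlinarith [h1, h2]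

lemma BLaux.phi_div_le {b c r s τ t : ℝ} (hb : 0 ≤ b) (hc : 0 ≤ c) (hr : 1 ≤ r) (hs : 1 ≤ s)
    (hτ : 1 ≤ τ) :
    b * |t / τ| ^ r + c * |t / τ| ^ s ≤ (b * |t| ^ r + c * |t| ^ s) / τ := by
  have hτ0 : 0 < τ := lt_of_lt_of_le one_pos hτ
  have habs : |t / τ| = |t| / τ := by rw [abs_div, abs_of_pos hτ0]
  have hkey : ∀ p : ℝ, 1 ≤ p → |t / τ| ^ p ≤ |t| ^ p / τ := by
    intro p hp
    rw [habs, Real.div_rpow (abs_nonneg _) hτ0.le]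
    have hτp : τ ≤ τ ^ p := by
      calc τ = τ ^ (1:ℝ) := (Real.rpow_one τ).symm
      _ ≤ τ ^ p := Real.rpow_le_rpow_of_exponent_le hτ hp
    gcongr
  have h1 := mul_le_mul_of_nonneg_left (hkey r hr) hb
  have h2 := mul_le_mul_of_nonneg_left (hkey s hs) hc
  have he : (b * |t| ^ r + c * |t| ^ s) / τ = b * (|t| ^ r / τ) + c * (|t| ^ s / τ) := by
    ring
  linarith

lemma BLaux.phi_tendsto {b c r s : ℝ} (hr : 0 ≤ r) (hs : 0 ≤ s) {g : ℕ → ℝ} {l : ℝ}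
    (h : Tendsto g atTop (𝓝 l)) :
    Tendsto (fun n => b * |g n| ^ r + c * |g n| ^ s) atTop
      (𝓝 (b * |l| ^ r + c * |l| ^ s)) := by
  have h1 := ((h.abs.rpow_const (Or.inr hr)).const_mul b)
  have h2 := ((h.abs.rpow_const (Or.inr hs)).const_mul c)
  exact h1.add h2

lemma BLaux.two_rpow_bound {M p a b : ℝ} (hp0 : 0 ≤ p) (hpM : p ≤ M)
    (ha : 0 ≤ a) (hb : 0 ≤ b) : (a + b) ^ p ≤ 2 ^ M * (a ^ p + b ^ p) := by
  have hmax : (0:ℝ) ≤ max a b := le_max_of_le_left ha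
  have h1 : (a + b) ^ p ≤ (2 * max a b) ^ p := by
    apply Real.rpow_le_rpow (by linarith) _ hp0
    rcases max_cases a b with ⟨h, h2⟩ | ⟨h, h2⟩ <;> rw [h] <;> linarith
  have h2 : (2 * max a b) ^ p = 2 ^ p * (max a b) ^ p := Real.mul_rpow (by norm_num) hmax
  have h3 : (2:ℝ) ^ p ≤ 2 ^ M := Real.rpow_le_rpow_of_exponent_le one_le_two hpM
  have h4 : (max a b) ^ p ≤ a ^ p + b ^ p := by
    rcases max_choice a b with h | h <;> rw [h]
    · exact le_add_of_nonneg_right (Real.rpow_nonneg hb p)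
    · exact le_add_of_nonneg_left (Real.rpow_nonneg ha p)
  calc (a + b) ^ p ≤ 2 ^ p * (max a b) ^ p := by rw [← h2]; exact h1
  _ ≤ 2 ^ M * (a ^ p + b ^ p) :=
      mul_le_mul h3 h4 (Real.rpow_nonneg hmax p) (Real.rpow_nonneg (by norm_num) M)

lemma BLaux.phi_sub_le {b c r s M u v : ℝ} (hb : 0 ≤ b) (hc : 0 ≤ c) (hr : 0 ≤ r)
    (hrM : r ≤ M) (hs : 0 ≤ s) (hsM : s ≤ M) :
    b * |u - v| ^ r + c * |u - v| ^ s
      ≤ 2 ^ M * ((b * |u| ^ r + c * |u| ^ s) + (b * |v| ^ r + c * |v| ^ s)) := by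
  have htri : |u - v| ≤ |u| + |v| := abs_sub u v
  have hkey : ∀ p : ℝ, 0 ≤ p → p ≤ M → |u - v| ^ p ≤ 2 ^ M * (|u| ^ p + |v| ^ p) := by
    intro p hp hpM
    calc |u - v| ^ p ≤ (|u| + |v|) ^ p := Real.rpow_le_rpow (abs_nonneg _) htri hp
    _ ≤ 2 ^ M * (|u| ^ p + |v| ^ p) := BLaux.two_rpow_bound hp hpM (abs_nonneg _) (abs_nonneg _)
  have h1 := mul_le_mul_of_nonneg_left (hkey r hr hrM) hb
  have h2 := mul_le_mul_of_nonneg_left (hkey s hs hsM) hc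
  nlinarith [h1, h2]

set_option maxHeartbeats 1000000 in
/-- The Brezis–Lieb `ε`-inequality for `rpow`, uniform over exponents `p ∈ [1, M]`. -/
lemma BLaux.eps_rpow (M : ℝ) (hM : 1 ≤ M) {ε : ℝ} (hε : 0 < ε) :
    ∃ C : ℝ, 0 < C ∧ ∀ p : ℝ, 1 ≤ p → p ≤ M → ∀ u v : ℝ,
      abs (|u| ^ p - |u - v| ^ p) ≤ ε * |u - v| ^ p + C * |v| ^ p := by
  have hM0 : 0 ≤ M := by linarith
  have hcont : ContinuousAt (fun δ : ℝ => (1 + δ) ^ M - (1 - δ) ^ M) 0 := by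
    have h1 : ContinuousAt (fun δ : ℝ => (1 + δ) ^ M) 0 :=
      ContinuousAt.rpow_const (by fun_prop) (Or.inl (by norm_num))
    have h2 : ContinuousAt (fun δ : ℝ => (1 - δ) ^ M) 0 :=
      ContinuousAt.rpow_const (by fun_prop) (Or.inl (by norm_num))
    exact h1.sub h2
  have htend : Tendsto (fun δ : ℝ => (1 + δ) ^ M - (1 - δ) ^ M) (𝓝 0) (𝓝 0) := by
    have := hcont.tendsto
    simpa [Real.one_rpow] using this
  have hev : ∀ᶠ δ : ℝ in 𝓝 0, (1 + δ) ^ M - (1 - δ) ^ M < ε := htend.eventually (gt_mem_nhds hε)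
  obtain ⟨rr, hrr, hball⟩ := Metric.eventually_nhds_iff.mp hev
  set δ : ℝ := min (rr / 2) (1 / 2) with hδdef
  have hδ0 : 0 < δ := lt_min (by linarith) (by norm_num)
  have hδhalf : δ ≤ 1 / 2 := min_le_right _ _
  have hδε : (1 + δ) ^ M - (1 - δ) ^ M < ε := by
    apply hball
    rw [Real.dist_eq, sub_zero, abs_of_pos hδ0]
    calc δ ≤ rr / 2 := min_le_left _ _
    _ < rr := by linarith
  have hδinv : (1:ℝ) ≤ 1 + 1 / δ := by
    have : 0 < 1 / δ := by positivity
    linarith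
  refine ⟨2 * (1 + 1 / δ) ^ M, by positivity, ?_⟩
  intro p hp1 hpM u v
  have hp0 : 0 ≤ p := by linarith
  set a := |u - v| with hadef
  set w := |v| with hwdef
  set A := |u| with hAdef
  have ha0 : 0 ≤ a := abs_nonneg _
  have hw0 : 0 ≤ w := abs_nonneg _
  have hA0 : 0 ≤ A := abs_nonneg _
  have haw : |A - a| ≤ w := by
    have := abs_abs_sub_abs_le_abs_sub u (u - v)
    simpa using this
  rw [abs_le] at haw
  have hεa : 0 ≤ ε * a ^ p := mul_nonneg hε.le (Real.rpow_nonneg ha0 p)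
  have hCw : 0 ≤ 2 * (1 + 1 / δ) ^ M * w ^ p := by positivity
  rcases le_or_gt (δ * a) w with hcase | hcase
  · have h0 : a ≤ (1 / δ) * w := by
      have h : a ≤ w / δ := (le_div_iff₀ hδ0).2 (by linarith [mul_comm δ a])
      have he : w / δ = (1 / δ) * w := by ring
      linarith
    have hδw : 0 ≤ (1 / δ) * w := by positivity
    have h1 : a ≤ (1 + 1 / δ) * w := by linarith
    have h2 : A ≤ (1 + 1 / δ) * w := by linarith [haw.2]
    have hb : ∀ t : ℝ, 0 ≤ t → t ≤ (1 + 1 / δ) * w → t ^ p ≤ (1 + 1 / δ) ^ M * w ^ p := by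
      intro t ht hle
      calc t ^ p ≤ ((1 + 1 / δ) * w) ^ p := Real.rpow_le_rpow ht hle hp0
      _ = (1 + 1 / δ) ^ p * w ^ p := Real.mul_rpow (by linarith) hw0
      _ ≤ (1 + 1 / δ) ^ M * w ^ p :=
          mul_le_mul_of_nonneg_right (Real.rpow_le_rpow_of_exponent_le hδinv hpM)
            (Real.rpow_nonneg hw0 p)
    have hA := hb A hA0 h2
    have ha := hb a ha0 h1
    have h5 : 0 ≤ A ^ p := Real.rpow_nonneg hA0 p
    have h6 : 0 ≤ a ^ p := Real.rpow_nonneg ha0 p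
    rw [abs_le]
    constructor <;> nlinarith
  · have hapos : 0 < a := by nlinarith
    have h1δ : (0:ℝ) < 1 - δ := by linarith
    have hA_up : A ≤ (1 + δ) * a := by nlinarith
    have hA_lo : (1 - δ) * a ≤ A := by nlinarith
    have up : A ^ p ≤ (1 + δ) ^ M * a ^ p := by
      calc A ^ p ≤ ((1 + δ) * a) ^ p := Real.rpow_le_rpow hA0 hA_up hp0
      _ = (1 + δ) ^ p * a ^ p := Real.mul_rpow (by linarith) ha0
      _ ≤ (1 + δ) ^ M * a ^ p :=
          mul_le_mul_of_nonneg_right (Real.rpow_le_rpow_of_exponent_le (by linarith) hpM)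
            (Real.rpow_nonneg ha0 p)
    have lo : (1 - δ) ^ M * a ^ p ≤ A ^ p := by
      calc (1 - δ) ^ M * a ^ p ≤ (1 - δ) ^ p * a ^ p :=
          mul_le_mul_of_nonneg_right (Real.rpow_le_rpow_of_exponent_ge h1δ (by linarith) hpM)
            (Real.rpow_nonneg ha0 p)
      _ = ((1 - δ) * a) ^ p := (Real.mul_rpow h1δ.le ha0).symm
      _ ≤ A ^ p := Real.rpow_le_rpow (mul_nonneg h1δ.le ha0) hA_lo hp0
    have hone_le : (1:ℝ) ≤ (1 + δ) ^ M := by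
      have := Real.rpow_le_rpow zero_le_one (by linarith : (1:ℝ) ≤ 1 + δ) hM0
      simpa [Real.one_rpow] using this
    have hle_one : (1 - δ) ^ M ≤ 1 := by
      have := Real.rpow_le_rpow h1δ.le (by linarith : (1:ℝ) - δ ≤ 1) hM0
      simpa [Real.one_rpow] using this
    have h6 : 0 ≤ a ^ p := Real.rpow_nonneg ha0 p
    have hgoal : |A ^ p - a ^ p| ≤ ((1 + δ) ^ M - (1 - δ) ^ M) * a ^ p := by
      have t1 : ((1 + δ) ^ M - 1) * a ^ p ≤ ((1 + δ) ^ M - (1 - δ) ^ M) * a ^ p :=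
        mul_le_mul_of_nonneg_right (by linarith) h6
      have t2 : (1 - (1 - δ) ^ M) * a ^ p ≤ ((1 + δ) ^ M - (1 - δ) ^ M) * a ^ p :=
        mul_le_mul_of_nonneg_right (by linarith) h6
      rw [abs_le]
      constructor <;> [linarith [lo, t2]; linarith [up, t1]]
    calc |A ^ p - a ^ p| ≤ ((1 + δ) ^ M - (1 - δ) ^ M) * a ^ p := hgoal
    _ ≤ ε * a ^ p := mul_le_mul_of_nonneg_right hδε.le h6
    _ ≤ ε * a ^ p + 2 * (1 + 1 / δ) ^ M * w ^ p := le_add_of_nonneg_right hCw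

lemma BLaux.phi_bl_pointwise {b c r s M C ε' : ℝ} (hb : 0 ≤ b) (hc : 0 ≤ c)
    (hr : 1 ≤ r) (hrM : r ≤ M) (hs : 1 ≤ s) (hsM : s ≤ M)
    (hkey : ∀ p : ℝ, 1 ≤ p → p ≤ M → ∀ u v : ℝ,
      abs (|u| ^ p - |u - v| ^ p) ≤ ε' * |u - v| ^ p + C * |v| ^ p)
    (u v : ℝ) :
    |(b * |u| ^ r + c * |u| ^ s) - (b * |u - v| ^ r + c * |u - v| ^ s)
        - (b * |v| ^ r + c * |v| ^ s)|
      ≤ ε' * (b * |u - v| ^ r + c * |u - v| ^ s)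
        + (C + 1) * (b * |v| ^ r + c * |v| ^ s) := by
  have e1 := hkey r hr hrM u v
  have e2 := hkey s hs hsM u v
  rw [abs_le] at e1 e2
  have b1 := mul_le_mul_of_nonneg_left e1.2 hb
  have b2 := mul_le_mul_of_nonneg_left e1.1 hb
  have c1 := mul_le_mul_of_nonneg_left e2.2 hc
  have c2 := mul_le_mul_of_nonneg_left e2.1 hc
  have hR : 0 ≤ b * |v| ^ r + c * |v| ^ s := BLaux.phi_nonneg hb hc
  rw [abs_le]
  constructor <;> nlinarith [b1, b2, c1, c2, hR]

end BLaux

set_option maxHeartbeats 2000000 in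
/-- **Lemma 4.3** (Brezis–Lieb lemma for Musielak–Orlicz modulars): for
`Φ(x,t) = b(x) t^{r(x)} + c(x) t^{s(x)}` with `r < s` in `C₊(closure Ω)`,
`0 < b ∈ L¹(Ω)` and `0 ≤ c ∈ L¹(Ω)`, if `fₙ` is bounded in `L^Φ(Ω)` and `fₙ → f` a.e.,
then `f ∈ L^Φ(Ω)` and `∫_Ω |Φ(x,|fₙ|) − Φ(x,|fₙ − f|) − Φ(x,|f|)| dx → 0`. -/
theorem brezis_lieb_musielak
    (N : ℕ) (Ω : Set (EN N)) (hΩo : IsOpen Ω) (hΩb : Bornology.IsBounded Ω)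
    (r s b c : EN N → ℝ)
    (hr : ContinuousOn r (closure Ω)) (hs : ContinuousOn s (closure Ω))
    (hr1 : ∀ x ∈ closure Ω, 1 < r x) (hs1 : ∀ x ∈ closure Ω, 1 < s x)
    (hrs : ∀ x ∈ closure Ω, r x < s x)
    (hbint : IntegrableOn b Ω) (hbpos : ∀ᵐ x ∂volume.restrict Ω, 0 < b x)
    (hcint : IntegrableOn c Ω) (hcpos : ∀ᵐ x ∂volume.restrict Ω, 0 ≤ c x)
    (f : ℕ → EN N → ℝ) (flim : EN N → ℝ)
    (hmem : ∀ n, MemLspace Ω (fun x t => b x * |t| ^ r x + c x * |t| ^ s x) (f n))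
    (hbdd : ∃ C : ℝ, ∀ n,
      luxNorm Ω (fun x t => b x * |t| ^ r x + c x * |t| ^ s x) (f n) ≤ C)
    (hae : ∀ᵐ x ∂volume.restrict Ω, Tendsto (fun n => f n x) atTop (𝓝 (flim x))) :
    MemLspace Ω (fun x t => b x * |t| ^ r x + c x * |t| ^ s x) flim ∧
    Tendsto (fun n => ∫ x in Ω,
        |(b x * |f n x| ^ r x + c x * |f n x| ^ s x)
          - (b x * |f n x - flim x| ^ r x + c x * |f n x - flim x| ^ s x)
          - (b x * |flim x| ^ r x + c x * |flim x| ^ s x)|)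
      atTop (𝓝 0) := by
  by_cases hΩe : Ω = ∅
  · subst hΩe
    constructor
    · refine ⟨?_, ?_⟩
      · rw [Measure.restrict_empty]; exact aestronglyMeasurable_zero_measure _
      · exact integrableOn_empty
    · simp only [Measure.restrict_empty, integral_zero_measure]
      exact tendsto_const_nhds
  have hne : Ω.Nonempty := Set.nonempty_iff_ne_empty.mpr hΩe
  have hΩm : MeasurableSet Ω := hΩo.measurableSet
  -- measurability of the various integrands
  have hbm : AEMeasurable b (volume.restrict Ω) := hbint.aemeasurable
  have hcm : AEMeasurable c (volume.restrict Ω) := hcint.aemeasurable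
  have hrm : AEMeasurable r (volume.restrict Ω) := (hr.mono subset_closure).aemeasurable hΩm
  have hsm : AEMeasurable s (volume.restrict Ω) := (hs.mono subset_closure).aemeasurable hΩm
  have hfm : ∀ n, AEMeasurable (f n) (volume.restrict Ω) := fun n => (hmem n).1.aemeasurable
  have measPhi : ∀ g : EN N → ℝ, AEMeasurable g (volume.restrict Ω) →
      AEStronglyMeasurable (fun x => b x * |g x| ^ r x + c x * |g x| ^ s x)
        (volume.restrict Ω) := fun g hg =>
    ((hbm.mul ((measurable_abs.comp_aemeasurable hg).pow hrm)).add
      (hcm.mul ((measurable_abs.comp_aemeasurable hg).pow hsm))).aestronglyMeasurable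
  -- a uniform bound on the exponents
  have hccl : IsCompact (closure Ω) := hΩb.isCompact_closure
  obtain ⟨z, hz, hzmax⟩ := hccl.exists_isMaxOn hne.closure hs
  have hzm : ∀ y ∈ closure Ω, s y ≤ s z := fun y hy => hzmax hy
  set M : ℝ := max (s z) 1 with hMdef
  have hM1 : (1:ℝ) ≤ M := le_max_right _ _
  have hfacts : ∀ᵐ x ∂(volume.restrict Ω),
      0 ≤ b x ∧ 0 ≤ c x ∧ 1 ≤ r x ∧ r x ≤ M ∧ 1 ≤ s x ∧ s x ≤ M := by
    have hsub : ∀ x ∈ Ω, x ∈ closure Ω := fun x hx => subset_closure hx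
    filter_upwards [hbpos, hcpos, ae_restrict_of_forall_mem hΩm hsub] with x hbx hcx hxc
    have h1 : s x ≤ M := le_trans (hzm x hxc) (le_max_left _ _)
    exact ⟨hbx.le, hcx, (hr1 x hxc).le, le_trans (hrs x hxc).le h1, (hs1 x hxc).le, h1⟩
  -- Step 1: uniform bound on the modulars of the `f n`
  obtain ⟨C0, hC0⟩ := hbdd
  set T : ℝ := max C0 0 + 1 with hTdef
  have hT1 : (1:ℝ) ≤ T := by
    have := le_max_right C0 0; simp only [hTdef]; linarith
  have hT0 : 0 < T := by linarith
  have hint_scale : ∀ n, ∀ τ : ℝ, 0 < τ →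
      Integrable (fun x => b x * |f n x / τ| ^ r x + c x * |f n x / τ| ^ s x)
        (volume.restrict Ω) := by
    intro n τ hτ
    set lam : ℝ := max 1 (1 / τ) with hlamdef
    have hlam1 : (1:ℝ) ≤ lam := le_max_left _ _
    apply Integrable.mono' ((hmem n).2.const_mul (lam ^ M))
    · exact measPhi _ ((hfm n).div_const τ)
    · filter_upwards [hfacts] with x hx
      obtain ⟨hbx, hcx, hr1x, hrMx, hs1x, hsMx⟩ := hx
      rw [Real.norm_eq_abs, abs_of_nonneg (BLaux.phi_nonneg hbx hcx)]
      have hmono : |f n x / τ| ≤ |lam * f n x| := by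
        rw [abs_div, abs_of_pos hτ, abs_mul, abs_of_pos (lt_of_lt_of_le one_pos hlam1)]
        have h1 : |f n x| / τ = (1 / τ) * |f n x| := by ring
        rw [h1]
        exact mul_le_mul_of_nonneg_right (le_max_right _ _) (abs_nonneg _)
      calc b x * |f n x / τ| ^ r x + c x * |f n x / τ| ^ s x
          ≤ b x * |lam * f n x| ^ r x + c x * |lam * f n x| ^ s x :=
            BLaux.phi_mono hbx hcx (by linarith) (by linarith) hmono
      _ ≤ lam ^ M * (b x * |f n x| ^ r x + c x * |f n x| ^ s x) :=
            BLaux.phi_scale hbx hcx (by linarith) hrMx (by linarith) hsMx hlam1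
  have hρ0 : ∀ n, 0 ≤ ∫ x in Ω, (b x * |f n x| ^ r x + c x * |f n x| ^ s x) := by
    intro n
    apply integral_nonneg_of_ae
    filter_upwards [hfacts] with x hx
    exact BLaux.phi_nonneg hx.1 hx.2.1
  have hmod_T : ∀ n,
      (∫ x in Ω, (b x * |f n x / T| ^ r x + c x * |f n x / T| ^ s x)) ≤ 1 := by
    intro n
    have hC0n := hC0 n
    simp only [luxNorm] at hC0n
    have hSne : {τ : ℝ | 0 < τ ∧
        (∫ x in Ω, (b x * |f n x / τ| ^ r x + c x * |f n x / τ| ^ s x)) ≤ 1}.Nonempty := by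
      set ρ := ∫ x in Ω, (b x * |f n x| ^ r x + c x * |f n x| ^ s x) with hρdef
      have hρn : 0 ≤ ρ := hρ0 n
      refine ⟨ρ + 1, by linarith, ?_⟩
      have hτ1 : (1:ℝ) ≤ ρ + 1 := by linarith
      have hmono : (∫ x in Ω, (b x * |f n x / (ρ+1)| ^ r x + c x * |f n x / (ρ+1)| ^ s x))
          ≤ (∫ x in Ω, (b x * |f n x| ^ r x + c x * |f n x| ^ s x)) / (ρ + 1) := by
        rw [← integral_div]
        apply integral_mono_ae (hint_scale n _ (by linarith)) ((hmem n).2.div_const _)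
        filter_upwards [hfacts] with x hx
        exact BLaux.phi_div_le hx.1 hx.2.1 hx.2.2.1 hx.2.2.2.2.1 hτ1
      refine le_trans hmono ?_
      rw [← hρdef, div_le_one (by linarith)]
      linarith
    have hSbd : BddBelow {τ : ℝ | 0 < τ ∧
        (∫ x in Ω, (b x * |f n x / τ| ^ r x + c x * |f n x / τ| ^ s x)) ≤ 1} :=
      ⟨0, fun τ hτ => hτ.1.le⟩
    have hlt : sInf {τ : ℝ | 0 < τ ∧
        (∫ x in Ω, (b x * |f n x / τ| ^ r x + c x * |f n x / τ| ^ s x)) ≤ 1} < T := by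
      refine lt_of_le_of_lt hC0n ?_
      have := le_max_left C0 0
      simp only [hTdef]; linarith
    obtain ⟨τ, hτS, hτT⟩ := (csInf_lt_iff hSbd hSne).mp hlt
    have hTτ : (∫ x in Ω, (b x * |f n x / T| ^ r x + c x * |f n x / T| ^ s x))
        ≤ ∫ x in Ω, (b x * |f n x / τ| ^ r x + c x * |f n x / τ| ^ s x) := by
      apply integral_mono_ae (hint_scale n T hT0) (hint_scale n τ hτS.1)
      filter_upwards [hfacts] with x hx
      apply BLaux.phi_mono hx.1 hx.2.1 (by linarith [hx.2.2.1]) (by linarith [hx.2.2.2.2.1])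
      rw [abs_div, abs_div, abs_of_pos hT0, abs_of_pos hτS.1]
      exact div_le_div_of_nonneg_left (abs_nonneg _) hτS.1 hτT.le
    exact le_trans hTτ hτS.2
  set B : ℝ := T ^ M with hBdef
  have hB0 : 0 ≤ B := Real.rpow_nonneg (by linarith) M
  have hB : ∀ n, (∫ x in Ω, (b x * |f n x| ^ r x + c x * |f n x| ^ s x)) ≤ B := by
    intro n
    have hpt : ∀ᵐ x ∂(volume.restrict Ω),
        b x * |f n x| ^ r x + c x * |f n x| ^ s x
          ≤ T ^ M * (b x * |f n x / T| ^ r x + c x * |f n x / T| ^ s x) := by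
      filter_upwards [hfacts] with x hx
      obtain ⟨hbx, hcx, hr1x, hrMx, hs1x, hsMx⟩ := hx
      have he : f n x = T * (f n x / T) := by field_simp
      calc b x * |f n x| ^ r x + c x * |f n x| ^ s x
          = b x * |T * (f n x / T)| ^ r x + c x * |T * (f n x / T)| ^ s x := by rw [← he]
      _ ≤ T ^ M * (b x * |f n x / T| ^ r x + c x * |f n x / T| ^ s x) :=
          BLaux.phi_scale hbx hcx (by linarith) hrMx (by linarith) hsMx hT1
    calc (∫ x in Ω, (b x * |f n x| ^ r x + c x * |f n x| ^ s x))
        ≤ ∫ x in Ω, T ^ M * (b x * |f n x / T| ^ r x + c x * |f n x / T| ^ s x) :=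
          integral_mono_ae (hmem n).2 ((hint_scale n T hT0).const_mul _) hpt
    _ = T ^ M * ∫ x in Ω, (b x * |f n x / T| ^ r x + c x * |f n x / T| ^ s x) :=
          integral_const_mul _ _
    _ ≤ T ^ M * 1 := mul_le_mul_of_nonneg_left (hmod_T n) (Real.rpow_nonneg (by linarith) M)
    _ = B := by rw [mul_one]
  -- Step 2: `flim ∈ L^Φ(Ω)` via Fatou's lemma
  have hflm : AEStronglyMeasurable flim (volume.restrict Ω) :=
    aestronglyMeasurable_of_tendsto_ae atTop (fun n => (hmem n).1) hae
  have hfmm : AEMeasurable flim (volume.restrict Ω) := hflm.aemeasurable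
  have hfin : IntegrableOn (fun x => b x * |flim x| ^ r x + c x * |flim x| ^ s x) Ω := by
    refine ⟨measPhi flim hfmm, ?_⟩
    rw [hasFiniteIntegral_iff_norm]
    have hcongr : (∫⁻ x in Ω, ENNReal.ofReal ‖b x * |flim x| ^ r x + c x * |flim x| ^ s x‖)
        = ∫⁻ x in Ω, ENNReal.ofReal (b x * |flim x| ^ r x + c x * |flim x| ^ s x) := by
      apply lintegral_congr_ae
      filter_upwards [hfacts] with x hx
      rw [Real.norm_eq_abs, abs_of_nonneg (BLaux.phi_nonneg hx.1 hx.2.1)]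
    rw [hcongr]
    have hFm : ∀ n, AEMeasurable
        (fun x => ENNReal.ofReal (b x * |f n x| ^ r x + c x * |f n x| ^ s x))
        (volume.restrict Ω) :=
      fun n => ENNReal.measurable_ofReal.comp_aemeasurable (measPhi (f n) (hfm n)).aemeasurable
    have hlim_ae : ∀ᵐ x ∂(volume.restrict Ω),
        ENNReal.ofReal (b x * |flim x| ^ r x + c x * |flim x| ^ s x)
          = liminf (fun n =>
              ENNReal.ofReal (b x * |f n x| ^ r x + c x * |f n x| ^ s x)) atTop := by
      filter_upwards [hae, hfacts] with x hx hf2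
      have ht := BLaux.phi_tendsto (b := b x) (c := c x)
        (by linarith [hf2.2.2.1] : (0:ℝ) ≤ r x)
        (by linarith [hf2.2.2.2.2.1] : (0:ℝ) ≤ s x) hx
      exact ((ENNReal.tendsto_ofReal ht).liminf_eq).symm
    have hle : (∫⁻ x in Ω, ENNReal.ofReal (b x * |flim x| ^ r x + c x * |flim x| ^ s x))
        ≤ liminf (fun n => ∫⁻ x in Ω,
            ENNReal.ofReal (b x * |f n x| ^ r x + c x * |f n x| ^ s x)) atTop := by
      rw [lintegral_congr_ae hlim_ae]
      exact lintegral_liminf_le' hFm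
    have hbd : liminf (fun n => ∫⁻ x in Ω,
        ENNReal.ofReal (b x * |f n x| ^ r x + c x * |f n x| ^ s x)) atTop
        ≤ ENNReal.ofReal B := by
      have hone : ∀ n, (∫⁻ x in Ω,
          ENNReal.ofReal (b x * |f n x| ^ r x + c x * |f n x| ^ s x))
            ≤ ENNReal.ofReal B := by
        intro n
        rw [← ofReal_integral_eq_lintegral_ofReal (hmem n).2 ?_]
        · exact ENNReal.ofReal_le_ofReal (hB n)
        · filter_upwards [hfacts] with x hx
          exact BLaux.phi_nonneg hx.1 hx.2.1
      calc liminf (fun n => ∫⁻ x in Ω,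
          ENNReal.ofReal (b x * |f n x| ^ r x + c x * |f n x| ^ s x)) atTop
          ≤ liminf (fun _ => ENNReal.ofReal B) atTop :=
            Filter.liminf_le_liminf (Filter.Eventually.of_forall hone)
      _ = ENNReal.ofReal B := Filter.liminf_const _
    exact lt_of_le_of_lt (le_trans hle hbd) ENNReal.ofReal_lt_top
  refine ⟨⟨hflm, hfin⟩, ?_⟩
  -- Step 3: the Brezis-Lieb limit
  set ρf : ℝ := ∫ x in Ω, (b x * |flim x| ^ r x + c x * |flim x| ^ s x) with hρfdef
  have hρf0 : 0 ≤ ρf := by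
    apply integral_nonneg_of_ae
    filter_upwards [hfacts] with x hx
    exact BLaux.phi_nonneg hx.1 hx.2.1
  have hsubint : ∀ n, Integrable
      (fun x => b x * |f n x - flim x| ^ r x + c x * |f n x - flim x| ^ s x)
      (volume.restrict Ω) := by
    intro n
    apply Integrable.mono' (((hmem n).2.add hfin).const_mul (2 ^ M))
    · exact measPhi _ ((hfm n).sub hfmm)
    · filter_upwards [hfacts] with x hx
      obtain ⟨hbx, hcx, hr1x, hrMx, hs1x, hsMx⟩ := hx
      rw [Real.norm_eq_abs, abs_of_nonneg (BLaux.phi_nonneg hbx hcx)]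
      exact BLaux.phi_sub_le hbx hcx (by linarith) hrMx (by linarith) hsMx
  set K : ℝ := 2 ^ M * (B + ρf) with hKdef
  have h2M0 : (0:ℝ) ≤ 2 ^ M := Real.rpow_nonneg (by norm_num) M
  have hK0 : 0 ≤ K := mul_nonneg h2M0 (by linarith)
  have hsubbd : ∀ n, (∫ x in Ω,
      (b x * |f n x - flim x| ^ r x + c x * |f n x - flim x| ^ s x)) ≤ K := by
    intro n
    have step : (∫ x in Ω, (b x * |f n x - flim x| ^ r x + c x * |f n x - flim x| ^ s x))
        ≤ ∫ x in Ω, 2 ^ M * ((b x * |f n x| ^ r x + c x * |f n x| ^ s x)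
            + (b x * |flim x| ^ r x + c x * |flim x| ^ s x)) := by
      apply integral_mono_ae (hsubint n) (((hmem n).2.add hfin).const_mul _)
      filter_upwards [hfacts] with x hx
      obtain ⟨hbx, hcx, hr1x, hrMx, hs1x, hsMx⟩ := hx
      exact BLaux.phi_sub_le hbx hcx (by linarith) hrMx (by linarith) hsMx
    refine le_trans step ?_
    rw [integral_const_mul, integral_add (hmem n).2 hfin]
    rw [hKdef, ← hρfdef]
    apply mul_le_mul_of_nonneg_left _ h2M0
    have := hB n
    linarith
  have hsub0 : ∀ n, 0 ≤ ∫ x in Ω,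
      (b x * |f n x - flim x| ^ r x + c x * |f n x - flim x| ^ s x) := by
    intro n
    apply integral_nonneg_of_ae
    filter_upwards [hfacts] with x hx
    exact BLaux.phi_nonneg hx.1 hx.2.1
  rw [Metric.tendsto_atTop]
  intro ε hε
  set ε' : ℝ := ε / (2 * (K + 1)) with hε'def
  have hε'0 : 0 < ε' := by
    apply div_pos hε
    nlinarith
  obtain ⟨C, hCpos, hkey⟩ := BLaux.eps_rpow M hM1 hε'0
  have hDmeas : ∀ n, AEMeasurable (fun x =>
      |(b x * |f n x| ^ r x + c x * |f n x| ^ s x)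
        - (b x * |f n x - flim x| ^ r x + c x * |f n x - flim x| ^ s x)
        - (b x * |flim x| ^ r x + c x * |flim x| ^ s x)|) (volume.restrict Ω) := fun n =>
    measurable_abs.comp_aemeasurable
      (((measPhi (f n) (hfm n)).aemeasurable.sub
        (measPhi _ ((hfm n).sub hfmm)).aemeasurable).sub
        (measPhi flim hfmm).aemeasurable)
  have hDint : ∀ n, Integrable (fun x =>
      |(b x * |f n x| ^ r x + c x * |f n x| ^ s x)
        - (b x * |f n x - flim x| ^ r x + c x * |f n x - flim x| ^ s x)
        - (b x * |flim x| ^ r x + c x * |flim x| ^ s x)|) (volume.restrict Ω) := fun n =>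
    (((hmem n).2.sub (hsubint n)).sub hfin).abs
  set hh : ℕ → EN N → ℝ := fun n x => max
    ((|(b x * |f n x| ^ r x + c x * |f n x| ^ s x)
        - (b x * |f n x - flim x| ^ r x + c x * |f n x - flim x| ^ s x)
        - (b x * |flim x| ^ r x + c x * |flim x| ^ s x)|)
      - ε' * (b x * |f n x - flim x| ^ r x + c x * |f n x - flim x| ^ s x)) 0 with hhdef
  have hhmeas : ∀ n, AEStronglyMeasurable (hh n) (volume.restrict Ω) := fun n =>
    (((hDmeas n).sub
      ((measPhi _ ((hfm n).sub hfmm)).aemeasurable.const_mul ε')).max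
      aemeasurable_const).aestronglyMeasurable
  have hhbd : ∀ n, ∀ᵐ x ∂(volume.restrict Ω),
      ‖hh n x‖ ≤ (C + 1) * (b x * |flim x| ^ r x + c x * |flim x| ^ s x) := by
    intro n
    filter_upwards [hfacts] with x hx
    obtain ⟨hbx, hcx, hr1x, hrMx, hs1x, hsMx⟩ := hx
    have hble := BLaux.phi_bl_pointwise hbx hcx hr1x hrMx hs1x hsMx hkey (f n x) (flim x)
    have hmax0 : (0:ℝ) ≤ hh n x := le_max_right _ _
    rw [Real.norm_eq_abs, abs_of_nonneg hmax0]
    simp only [hhdef]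
    apply max_le _ (mul_nonneg (by linarith) (BLaux.phi_nonneg hbx hcx))
    linarith [hble]
  have hhint : ∀ n, Integrable (hh n) (volume.restrict Ω) := fun n =>
    Integrable.mono' (hfin.const_mul (C + 1)) (hhmeas n) (hhbd n)
  have hhtend : ∀ᵐ x ∂(volume.restrict Ω), Tendsto (fun n => hh n x) atTop (𝓝 0) := by
    filter_upwards [hae, hfacts] with x hx hf2
    obtain ⟨hbx, hcx, hr1x, hrMx, hs1x, hsMx⟩ := hf2
    have h1 : Tendsto (fun n => b x * |f n x| ^ r x + c x * |f n x| ^ s x) atTop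
        (𝓝 (b x * |flim x| ^ r x + c x * |flim x| ^ s x)) :=
      BLaux.phi_tendsto (by linarith) (by linarith) hx
    have h2 : Tendsto (fun n => b x * |f n x - flim x| ^ r x + c x * |f n x - flim x| ^ s x)
        atTop (𝓝 0) := by
      have hsubten : Tendsto (fun n => f n x - flim x) atTop (𝓝 (flim x - flim x)) :=
        hx.sub tendsto_const_nhds
      have := BLaux.phi_tendsto (b := b x) (c := c x) (r := r x) (s := s x)
        (by linarith) (by linarith) hsubten
      have hrne : r x ≠ 0 := by intro h0; rw [h0] at hr1x; linarith
      have hsne : s x ≠ 0 := by intro h0; rw [h0] at hs1x; linarith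
      simpa [sub_self, abs_zero, Real.zero_rpow hrne, Real.zero_rpow hsne] using this
    have hD : Tendsto (fun n =>
        |(b x * |f n x| ^ r x + c x * |f n x| ^ s x)
          - (b x * |f n x - flim x| ^ r x + c x * |f n x - flim x| ^ s x)
          - (b x * |flim x| ^ r x + c x * |flim x| ^ s x)|) atTop (𝓝 0) := by
      have := ((h1.sub h2).sub
        (tendsto_const_nhds (x := b x * |flim x| ^ r x + c x * |flim x| ^ s x))).abs
      simpa using this
    have := (hD.sub (h2.const_mul ε')).max (tendsto_const_nhds (x := (0:ℝ)))
    simp only [hhdef]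
    simpa using this
  have hDCT : Tendsto (fun n => ∫ x in Ω, hh n x) atTop (𝓝 0) := by
    have := tendsto_integral_of_dominated_convergence (μ := volume.restrict Ω)
      (F := hh) (f := fun _ => (0:ℝ))
      (fun x => (C + 1) * (b x * |flim x| ^ r x + c x * |flim x| ^ s x))
      hhmeas (hfin.const_mul (C + 1)) hhbd hhtend
    simpa using this
  obtain ⟨N0, hN0⟩ := (Metric.tendsto_atTop.mp hDCT) (ε / 2) (by linarith)
  refine ⟨N0, fun n hn => ?_⟩
  have hhn : (∫ x in Ω, hh n x) < ε / 2 := by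
    have := hN0 n hn
    rw [Real.dist_eq, sub_zero] at this
    exact lt_of_le_of_lt (le_abs_self _) this
  have hDle : (∫ x in Ω,
      |(b x * |f n x| ^ r x + c x * |f n x| ^ s x)
        - (b x * |f n x - flim x| ^ r x + c x * |f n x - flim x| ^ s x)
        - (b x * |flim x| ^ r x + c x * |flim x| ^ s x)|)
      ≤ (∫ x in Ω, hh n x) + ε' * ∫ x in Ω,
          (b x * |f n x - flim x| ^ r x + c x * |f n x - flim x| ^ s x) := by
    have hint2 : Integrable (fun x => hh n x
        + ε' * (b x * |f n x - flim x| ^ r x + c x * |f n x - flim x| ^ s x))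
        (volume.restrict Ω) := (hhint n).add ((hsubint n).const_mul ε')
    have hmono := integral_mono_ae (hDint n) hint2 ?_
    · rw [integral_add (hhint n) ((hsubint n).const_mul ε'), integral_const_mul] at hmono
      exact hmono
    · apply Filter.Eventually.of_forall
      intro x
      have hkey2 : ∀ d t : ℝ, d ≤ max (d - t) 0 + t := by
        intro d t
        have := le_max_left (d - t) (0:ℝ)
        linarith
      simp only [hhdef]
      exact hkey2 _ _
  have hD0 : 0 ≤ ∫ x in Ω,
      |(b x * |f n x| ^ r x + c x * |f n x| ^ s x)
        - (b x * |f n x - flim x| ^ r x + c x * |f n x - flim x| ^ s x)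
        - (b x * |flim x| ^ r x + c x * |flim x| ^ s x)| :=
    integral_nonneg fun x => abs_nonneg _
  rw [Real.dist_eq, sub_zero, abs_of_nonneg hD0]
  have hKne : K + 1 ≠ 0 := by positivity
  have hmul1 : ε' * (K + 1) = ε / 2 := by
    rw [hε'def]
    field_simp
  have hε'K : ε' * K < ε / 2 := by nlinarith
  have hmul : ε' * (∫ x in Ω,
      (b x * |f n x - flim x| ^ r x + c x * |f n x - flim x| ^ s x)) ≤ ε' * K :=
    mul_le_mul_of_nonneg_left (hsubbd n) hε'0.le
  linarith [hDle, hhn, hmul, hε'K]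

end DoublePhase
end
end
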